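/- arXiv:1403.2239 — 4 statements merged into one kernel-verified Lean document; each statement's English description precedes it below -/
import Mathlib

section
/- Inversion formula for discrete measures from full STFT measurements: for μ = Σ_ℓ a_ℓ δ_{t_ℓ} a finite discrete measure on ℝ with distinct points t_ℓ and g the L²-normalized Gaussian window, the limit lim_{F→∞} (1/(2F)) ∫_{−F}^{F} ∫_ℝ (V_g μ)(τ, f) · g(t − τ) · exp(2πi f t) dτ df equals a_ℓ if t = t_ℓ, and equals 0 otherwise. -/
open Real Complex MeasureTheory Filter

lemma gauss_integrable (s m : ℝ) (hs : 0 < s) :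
    Integrable (fun τ : ℝ => Real.exp (-((τ - m) ^ 2) / s ^ 2)) := by
  have h : Integrable (fun τ : ℝ => Real.exp (-(1 / s ^ 2) * τ ^ 2)) :=
    integrable_exp_neg_mul_sq (by positivity)
  have := h.comp_sub_right m
  refine this.congr (Filter.Eventually.of_forall fun τ => ?_)
  simp only []
  ring_nf

lemma gauss_int (s m : ℝ) (hs : 0 < s) :
    ∫ τ : ℝ, Real.exp (-((τ - m) ^ 2) / s ^ 2) = s * Real.sqrt π := by
  have h2 := integral_sub_right_eq_self (μ := volume)
    (fun u : ℝ => Real.exp (-(1 / s ^ 2) * u ^ 2)) m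
  have h1 : ∫ τ : ℝ, Real.exp (-((τ - m) ^ 2) / s ^ 2)
      = ∫ τ : ℝ, Real.exp (-(1 / s ^ 2) * (τ - m) ^ 2) := by
    congr 1; funext τ; ring_nf
  rw [h1, h2, integral_gaussian]
  rw [show π / (1 / s ^ 2) = π * s ^ 2 by field_simp]
  rw [Real.sqrt_mul' _ (by positivity), Real.sqrt_sq hs.le]
  ring

lemma prod_gauss_eq (σ p q τ : ℝ) :
    ((Real.sqrt (σ * Real.sqrt π))⁻¹ * Real.exp (-((p - τ) ^ 2) / (2 * σ ^ 2))) *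
      ((Real.sqrt (σ * Real.sqrt π))⁻¹ * Real.exp (-((q - τ) ^ 2) / (2 * σ ^ 2)))
    = ((Real.sqrt (σ * Real.sqrt π))⁻¹ ^ 2 * Real.exp (-((p - q) ^ 2) / (4 * σ ^ 2))) *
        Real.exp (-((τ - (p + q) / 2) ^ 2) / σ ^ 2) := by
  by_cases hσ : σ = 0
  · subst hσ; norm_num
  rw [mul_mul_mul_comm, ← Real.exp_add, ← pow_two, mul_assoc, ← Real.exp_add]
  congr 1
  field_simp
  ring

lemma prod_gauss (σ p q : ℝ) (hσ : 0 < σ) :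
    ∫ τ : ℝ, ((Real.sqrt (σ * Real.sqrt π))⁻¹ * Real.exp (-((p - τ) ^ 2) / (2 * σ ^ 2))) *
      ((Real.sqrt (σ * Real.sqrt π))⁻¹ * Real.exp (-((q - τ) ^ 2) / (2 * σ ^ 2)))
    = Real.exp (-((p - q) ^ 2) / (4 * σ ^ 2)) := by
  have hσπ : 0 < σ * Real.sqrt π := by positivity
  simp_rw [prod_gauss_eq]
  rw [MeasureTheory.integral_const_mul, gauss_int σ ((p + q) / 2) hσ]
  have hC2 : ((Real.sqrt (σ * Real.sqrt π))⁻¹) ^ 2 = (σ * Real.sqrt π)⁻¹ := by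
    rw [← Real.sqrt_inv, Real.sq_sqrt (by positivity)]
  rw [hC2]
  field_simp

lemma gauss_prod_integrable (σ p q : ℝ) (hσ : 0 < σ) :
    Integrable (fun τ : ℝ =>
      ((Real.sqrt (σ * Real.sqrt π))⁻¹ * Real.exp (-((p - τ) ^ 2) / (2 * σ ^ 2))) *
      ((Real.sqrt (σ * Real.sqrt π))⁻¹ * Real.exp (-((q - τ) ^ 2) / (2 * σ ^ 2)))) := by
  simp_rw [prod_gauss_eq]
  exact (gauss_integrable σ ((p + q) / 2) hσ).const_mul _

/-- Inversion of the STFT of a finite discrete measure with (L²-normalized) Gaussian window: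
the time-frequency average `(1/(2F)) ∫_{−F}^{F} ∫_ℝ (V_g μ)(τ,f) g(t−τ) e^{2πi f t} dτ df`
converges, as `F → ∞`, to `a_ℓ` if `t = t_ℓ` and to `0` otherwise. -/
theorem stft_inversion_discrete_measure
    (σ : ℝ) (hσ : 0 < σ) (n : ℕ) (t : Fin n → ℝ) (ht : Function.Injective t)
    (a : Fin n → ℂ)
    (g : ℝ → ℝ)
    (hg : ∀ x, g x = (Real.sqrt (σ * Real.sqrt π))⁻¹ * Real.exp (-(x ^ 2) / (2 * σ ^ 2)))
    (V : ℝ → ℝ → ℂ)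
    (hV : ∀ τ f, V τ f = ∑ ℓ, a ℓ * (g (t ℓ - τ) : ℂ) *
      Complex.exp (-2 * Real.pi * Complex.I * f * t ℓ))
    (x : ℝ) :
    Tendsto
      (fun F : ℝ => (1 / (2 * F) : ℂ) *
        ∫ f in (-F)..F, ∫ τ : ℝ,
          V τ f * (g (x - τ) : ℂ) * Complex.exp (2 * Real.pi * Complex.I * f * x))
      atTop (nhds (∑ ℓ, if x = t ℓ then a ℓ else 0)) := by
  set E : Fin n → ℝ := fun ℓ => Real.exp (-((x - t ℓ) ^ 2) / (4 * σ ^ 2)) with hE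
  set d : Fin n → ℂ := fun ℓ => (2 * π * (x - t ℓ) : ℝ) * Complex.I with hd
  -- Step 1: the inner integral
  have hinner : ∀ f : ℝ, (∫ τ : ℝ, V τ f * (g (x - τ) : ℂ) *
        Complex.exp (2 * Real.pi * Complex.I * f * x))
      = ∑ ℓ, a ℓ * (E ℓ : ℂ) * Complex.exp (d ℓ * f) := by
    intro f
    have h1 : ∀ τ : ℝ, V τ f * (g (x - τ) : ℂ) * Complex.exp (2 * Real.pi * Complex.I * f * x)
        = ∑ ℓ, (a ℓ * Complex.exp (-2 * Real.pi * Complex.I * f * t ℓ) *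
            Complex.exp (2 * Real.pi * Complex.I * f * x)) *
            ((g (t ℓ - τ) * g (x - τ) : ℝ) : ℂ) := by
      intro τ
      rw [hV, Finset.sum_mul, Finset.sum_mul]
      refine Finset.sum_congr rfl fun ℓ _ => ?_
      push_cast
      ring
    simp_rw [h1]
    rw [MeasureTheory.integral_finset_sum _ (fun ℓ _ => ?_)]
    · refine Finset.sum_congr rfl fun ℓ _ => ?_
      rw [MeasureTheory.integral_const_mul,
        show (∫ τ : ℝ, ((g (t ℓ - τ) * g (x - τ) : ℝ) : ℂ))
          = (((∫ τ : ℝ, g (t ℓ - τ) * g (x - τ)) : ℝ) : ℂ) from integral_ofReal]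
      have : (∫ τ : ℝ, g (t ℓ - τ) * g (x - τ)) = E ℓ := by
        simp_rw [hg]
        rw [prod_gauss σ (t ℓ) x hσ, hE]
        congr 1
        ring_nf
      rw [this]
      rw [show d ℓ * f = -2 * Real.pi * Complex.I * f * t ℓ +
        2 * Real.pi * Complex.I * f * x by rw [hd]; push_cast; ring, Complex.exp_add]
      ring
    · apply Integrable.const_mul
      have hre : Integrable (fun τ : ℝ => g (t ℓ - τ) * g (x - τ)) := by
        simp_rw [hg]
        exact gauss_prod_integrable σ (t ℓ) x hσ
      exact hre.ofReal
  -- Step 2: outer integral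
  have houter : ∀ F : ℝ, ((1 / (2 * F) : ℂ) *
        ∫ f in (-F)..F, ∫ τ : ℝ, V τ f * (g (x - τ) : ℂ) *
          Complex.exp (2 * Real.pi * Complex.I * f * x))
      = ∑ ℓ, (1 / (2 * F) : ℂ) * (a ℓ * (E ℓ : ℂ) *
          ∫ f in (-F)..F, Complex.exp (d ℓ * f)) := by
    intro F
    simp_rw [hinner]
    rw [intervalIntegral.integral_finset_sum (fun ℓ _ =>
      ((by fun_prop : Continuous fun f : ℝ => a ℓ * (E ℓ : ℂ) *
        Complex.exp (d ℓ * f)).intervalIntegrable _ _)), Finset.mul_sum]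
    refine Finset.sum_congr rfl fun ℓ _ => ?_
    rw [intervalIntegral.integral_const_mul]
  simp only [houter]
  -- Step 3: term-by-term limits
  apply tendsto_finset_sum
  intro ℓ _
  by_cases hx : x = t ℓ
  · simp only [hx, if_pos rfl]
    have hd0 : d ℓ = 0 := by rw [hd]; simp [hx]
    have hE1 : E ℓ = 1 := by rw [hE]; simp [hx]
    apply Tendsto.congr' (f₁ := fun _ => a ℓ)
    · filter_upwards [eventually_gt_atTop (0 : ℝ)] with F hF
      rw [hd0, hE1]
      simp only [zero_mul, Complex.exp_zero, Complex.ofReal_one, mul_one]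
      rw [intervalIntegral.integral_const]
      have hF' : (F : ℂ) ≠ 0 := by exact_mod_cast hF.ne'
      field_simp
      rw [Complex.real_smul, mul_one]; push_cast; ring
    · exact tendsto_const_nhds
  · simp only [if_neg hx]
    have hc : (2 * π * (x - t ℓ) : ℝ) ≠ 0 := by
      have h1 : x - t ℓ ≠ 0 := sub_ne_zero.mpr hx
      exact mul_ne_zero (mul_ne_zero two_ne_zero Real.pi_ne_zero) h1
    have hdne : d ℓ ≠ 0 := by
      rw [hd]
      exact mul_ne_zero (by exact_mod_cast hc) Complex.I_ne_zero
    have hdpos : 0 < ‖d ℓ‖ := norm_pos_iff.mpr hdne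
    have hnorm : ∀ r : ℝ, ‖Complex.exp (d ℓ * r)‖ = 1 := by
      intro r
      rw [hd]
      rw [show ((2 * π * (x - t ℓ) : ℝ) : ℂ) * Complex.I * (r : ℂ)
        = ((2 * π * (x - t ℓ) * r : ℝ) : ℂ) * Complex.I by push_cast; ring]
      exact Complex.norm_exp_ofReal_mul_I _
    apply squeeze_zero_norm' (a := fun F : ℝ => (‖a ℓ * (E ℓ : ℂ)‖ / ‖d ℓ‖) * F⁻¹)
    · filter_upwards [eventually_gt_atTop (0 : ℝ)] with F hF
      rw [integral_exp_mul_complex hdne]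
      have h1F : ‖(1 / (2 * (F : ℂ)))‖ = 1 / (2 * F) := by
        rw [show (1 / (2 * (F : ℂ))) = ((1 / (2 * F) : ℝ) : ℂ) by push_cast; ring]
        rw [Complex.norm_real, Real.norm_of_nonneg (by positivity)]
      calc ‖(1 / (2 * (F : ℂ))) * (a ℓ * (E ℓ : ℂ) *
              ((Complex.exp (d ℓ * F) - Complex.exp (d ℓ * (-F : ℝ))) / d ℓ))‖
          = (1 / (2 * F)) * (‖a ℓ * (E ℓ : ℂ)‖ *
              (‖Complex.exp (d ℓ * F) - Complex.exp (d ℓ * (-F : ℝ))‖ / ‖d ℓ‖)) := by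
            rw [norm_mul, norm_mul, h1F, norm_div]
        _ ≤ (1 / (2 * F)) * (‖a ℓ * (E ℓ : ℂ)‖ * (2 / ‖d ℓ‖)) := by
            gcongr
            calc ‖Complex.exp (d ℓ * F) - Complex.exp (d ℓ * (-F : ℝ))‖
                ≤ ‖Complex.exp (d ℓ * F)‖ + ‖Complex.exp (d ℓ * (-F : ℝ))‖ := norm_sub_le _ _
              _ = 2 := by rw [hnorm, hnorm]; norm_num
        _ = (‖a ℓ * (E ℓ : ℂ)‖ / ‖d ℓ‖) * F⁻¹ := by
            field_simp
    · have := (tendsto_inv_atTop_zero (𝕜 := ℝ)).const_mul (‖a ℓ * (E ℓ : ℂ)‖ / ‖d ℓ‖)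
      simpa using this
end

section
/- Dual certificate implies optimality: suppose μ = Σ_ℓ a_ℓ δ_{t_ℓ} (finite, a_ℓ ≠ 0, distinct t_ℓ) and there is a continuous function φ = A*c₀ with ‖φ‖_∞ ≤ 1 and φ(t_ℓ) = a_ℓ/|a_ℓ| for all ℓ. Then every complex measure ν with Aν = Aμ satisfies ‖ν‖_TV ≥ ‖μ‖_TV, i.e., μ minimizes the TV norm subject to the measurement constraint. -/
open MeasureTheory Complex

/-- A finite complex Radon measure on ℝ, given by its polar decomposition
`dν = u·d|ν|`, where `|ν|` is a finite positive measure and `|u| = 1` a.e. -/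
structure CMeasure where
  /-- the total variation measure `|ν|` -/
  pos : Measure ℝ
  /-- the unimodular density `u` in `dν = u·d|ν|` -/
  density : ℝ → ℂ
  finite : IsFiniteMeasure pos
  unimodular : ∀ᵐ x ∂pos, ‖density x‖ = 1

/-- The total variation norm `‖ν‖_TV = |ν|(ℝ)`. -/
noncomputable def CMeasure.TV (ν : CMeasure) : ℝ := (ν.pos Set.univ).toReal

/-- The real dual pairing `⟨ν, ψ⟩ = Re ∫ conj(ψ) dν`. -/
noncomputable def CMeasure.pair (ν : CMeasure) (ψ : ℝ → ℂ) : ℝ :=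
  (∫ x, (starRingEnd ℂ) (ψ x) * ν.density x ∂ν.pos).re

/-- Dual certificate implies optimality: if `φ = A*c₀` is continuous with `‖φ‖_∞ ≤ 1` and
interpolates the phases `a_ℓ/|a_ℓ|` of `μ = Σ_ℓ a_ℓ δ_{t_ℓ}` at the points `t_ℓ`, then any
complex measure `ν` with `Aν = Aμ` satisfies `‖ν‖_TV ≥ ‖μ‖_TV = Σ_ℓ |a_ℓ|`. -/
theorem dual_certificate_implies_optimality
    {Y C : Type*} (A : CMeasure → Y) (Aadj : C → ℝ → ℂ) (pairY : C → Y → ℝ)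
    (hadjoint : ∀ (ν : CMeasure) (c : C), pairY c (A ν) = ν.pair (Aadj c))
    (n : ℕ) (t : Fin n → ℝ) (ht : Function.Injective t)
    (a : Fin n → ℂ) (ha : ∀ ℓ, a ℓ ≠ 0)
    (μ : CMeasure)
    (hμpos : μ.pos = ∑ ℓ, (ENNReal.ofReal (‖a ℓ‖)) • Measure.dirac (t ℓ))
    (hμdens : ∀ ℓ, μ.density (t ℓ) = a ℓ / (‖a ℓ‖ : ℂ))
    (c₀ : C) (φ : ℝ → ℂ) (hφ : φ = Aadj c₀)
    (hφc : Continuous φ) (hφ1 : ∀ x, ‖φ x‖ ≤ 1)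
    (hφint : ∀ ℓ, φ (t ℓ) = a ℓ / (‖a ℓ‖ : ℂ))
    (ν : CMeasure) (hν : A ν = A μ) :
    ∑ ℓ, ‖a ℓ‖ ≤ ν.TV := by
  haveI := ν.finite
  haveI := μ.finite
  -- Step 1: compute μ.pair φ = ∑ |a ℓ|
  have key : μ.pair φ = ∑ ℓ, ‖a ℓ‖ := by
    unfold CMeasure.pair
    rw [hμpos]
    have hint : ∀ ℓ ∈ Finset.univ, Integrable
        (fun x => (starRingEnd ℂ) (φ x) * μ.density x)
        ((ENNReal.ofReal (‖a ℓ‖)) • Measure.dirac (t ℓ)) := by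
      intro ℓ _
      have hae : (fun x => (starRingEnd ℂ) (φ x) * μ.density x)
          =ᵐ[Measure.dirac (t ℓ)]
          (fun _ => (starRingEnd ℂ) (φ (t ℓ)) * μ.density (t ℓ)) := by
        rw [Filter.EventuallyEq, ae_dirac_eq]
        simp
      exact ((integrable_const _).congr hae.symm).smul_measure ENNReal.ofReal_ne_top
    rw [integral_finset_sum_measure hint, Complex.re_sum]
    refine Finset.sum_congr rfl (fun ℓ _ => ?_)
    rw [integral_smul_measure, integral_dirac, hμdens ℓ, hφint ℓ]
    have h1 : (starRingEnd ℂ) (a ℓ / (‖a ℓ‖ : ℂ)) * (a ℓ / (‖a ℓ‖ : ℂ)) = 1 := by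
      rw [mul_comm, Complex.mul_conj']
      have hn : ‖a ℓ / (‖a ℓ‖ : ℂ)‖ = 1 := by
        rw [norm_div, Complex.norm_real, Real.norm_eq_abs,
          _root_.abs_of_nonneg (norm_nonneg _), div_self (norm_ne_zero_iff.mpr (ha ℓ))]
      rw [hn]
      norm_num
    rw [h1]
    simp [ENNReal.toReal_ofReal (norm_nonneg _)]
  -- Step 2: weak duality ν.pair φ ≤ ν.TV
  have wd : ν.pair φ ≤ ν.TV := by
    unfold CMeasure.pair CMeasure.TV
    calc (∫ x, (starRingEnd ℂ) (φ x) * ν.density x ∂ν.pos).re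
        ≤ ‖∫ x, (starRingEnd ℂ) (φ x) * ν.density x ∂ν.pos‖ := by
          exact Complex.re_le_norm _
      _ ≤ (∫⁻ x, ENNReal.ofReal ‖(starRingEnd ℂ) (φ x) * ν.density x‖ ∂ν.pos).toReal :=
          norm_integral_le_lintegral_norm _
      _ ≤ (ν.pos Set.univ).toReal := by
          apply ENNReal.toReal_mono (measure_ne_top _ _)
          calc ∫⁻ x, ENNReal.ofReal ‖(starRingEnd ℂ) (φ x) * ν.density x‖ ∂ν.pos
              ≤ ∫⁻ _, 1 ∂ν.pos := by
                apply lintegral_mono_ae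
                filter_upwards [ν.unimodular] with x hx
                apply ENNReal.ofReal_le_one.mpr
                rw [norm_mul, RCLike.norm_conj, hx, mul_one]
                exact hφ1 x
            _ = ν.pos Set.univ := by simp
  -- Combine
  have h1 := hadjoint μ c₀
  have h2 := hadjoint ν c₀
  rw [hν, h1, ← hφ] at h2
  calc ∑ ℓ, ‖a ℓ‖ = μ.pair φ := key.symm
    _ = ν.pair φ := h2
    _ ≤ ν.TV := wd
end

section
/- Strict dual certificate implies uniqueness of support: under the setup of the previous statement, assume additionally |φ(t)| < 1 for all t ∉ T = {t_1, …, t_n}. Then any TV-minimizer ν with Aν = Aμ is supported on T, i.e., |ν|(ℝ \ T) = 0. -/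
open MeasureTheory Complex

set_option maxHeartbeats 1000000

/-- Any function is a.e. equal to a constant w.r.t. a Dirac measure. -/
lemma ae_eq_const_dirac {α E : Type*} [MeasurableSpace α] [MeasurableSingletonClass α]
    (f : α → E) (a : α) : f =ᵐ[Measure.dirac a] (fun _ => f a) := by
  rw [Filter.EventuallyEq, ae_iff]
  refine measure_mono_null (fun x hx => ?_) (?_ : Measure.dirac a {a}ᶜ = 0)
  · simp only [Set.mem_setOf_eq] at hx
    intro h
    exact hx (by simp at h; rw [h])
  · rw [Measure.dirac_apply' _ (MeasurableSet.singleton a).compl]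
    simp

/-- Strict dual certificate implies uniqueness of support: if moreover `|φ(t)| < 1` off
`T = {t_1, …, t_n}`, then any TV-minimizer `ν` with `Aν = Aμ` satisfies `|ν|(ℝ \ T) = 0`. -/
theorem strict_dual_certificate_support
    {Y C : Type*} (A : CMeasure → Y) (Aadj : C → ℝ → ℂ) (pairY : C → Y → ℝ)
    (hadjoint : ∀ (ν : CMeasure) (c : C), pairY c (A ν) = ν.pair (Aadj c))
    (n : ℕ) (t : Fin n → ℝ) (ht : Function.Injective t)
    (a : Fin n → ℂ) (ha : ∀ ℓ, a ℓ ≠ 0)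
    (μ : CMeasure)
    (hμpos : μ.pos = ∑ ℓ, (ENNReal.ofReal (‖a ℓ‖)) • Measure.dirac (t ℓ))
    (hμdens : ∀ ℓ, μ.density (t ℓ) = a ℓ / (‖a ℓ‖ : ℂ))
    (c₀ : C) (φ : ℝ → ℂ) (hφ : φ = Aadj c₀)
    (hφc : Continuous φ) (hφ1 : ∀ x, ‖φ x‖ ≤ 1)
    (hφint : ∀ ℓ, φ (t ℓ) = a ℓ / (‖a ℓ‖ : ℂ))
    (hφstrict : ∀ x : ℝ, x ∉ Set.range t → ‖φ x‖ < 1)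
    (ν : CMeasure) (hν : A ν = A μ) (hmin : ν.TV = μ.TV) :
    ν.pos (Set.univ \ Set.range t) = 0 := by
  classical
  have hfinν := ν.finite
  have hfinμ := μ.finite
  -- the pairings agree
  have hpair : ν.pair φ = μ.pair φ := by
    rw [hφ, ← hadjoint, ← hadjoint, hν]
  -- the value at the spikes
  have hgμ : ∀ ℓ, (starRingEnd ℂ) (φ (t ℓ)) * μ.density (t ℓ) = 1 := by
    intro ℓ
    rw [hφint, hμdens, mul_comm, Complex.mul_conj]
    have habs : ‖a ℓ / (‖a ℓ‖ : ℂ)‖ = 1 := by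
      rw [norm_div, Complex.norm_real, norm_norm]
      exact div_self (norm_ne_zero_iff.mpr (ha ℓ))
    rw [← Complex.sq_norm, habs]
    norm_num
  -- integrability of the certificate against μ's components
  have hintμ : ∀ ℓ : Fin n, Integrable (fun x => (starRingEnd ℂ) (φ x) * μ.density x)
      ((ENNReal.ofReal (‖a ℓ‖)) • Measure.dirac (t ℓ)) := by
    intro ℓ
    rw [integrable_smul_measure
      (ne_of_gt (ENNReal.ofReal_pos.mpr (norm_pos_iff.mpr (ha ℓ)))) ENNReal.ofReal_ne_top]
    have h1 : Integrable (fun _ : ℝ => (starRingEnd ℂ) (φ (t ℓ)) * μ.density (t ℓ))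
        (Measure.dirac (t ℓ)) := integrable_const _
    have h2 := ae_eq_const_dirac (fun x => (starRingEnd ℂ) (φ x) * μ.density x) (t ℓ)
    exact h1.congr h2.symm
  -- μ's pairing with φ equals ∑ |a ℓ|
  have hμpair : μ.pair φ = ∑ ℓ, ‖a ℓ‖ := by
    unfold CMeasure.pair
    rw [hμpos, integral_finset_sum_measure (fun ℓ _ => hintμ ℓ)]
    have : ∀ ℓ : Fin n, ∫ x, (starRingEnd ℂ) (φ x) * μ.density x
        ∂((ENNReal.ofReal (‖a ℓ‖)) • Measure.dirac (t ℓ))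
        = ((‖a ℓ‖ : ℝ) : ℂ) := by
      intro ℓ
      rw [integral_smul_measure, integral_dirac, hgμ,
        ENNReal.toReal_ofReal (norm_nonneg _)]
      simp [Complex.real_smul]
    rw [Finset.sum_congr rfl (fun ℓ _ => this ℓ)]
    push_cast
    simp [Complex.re_sum]
  -- μ's TV norm equals ∑ |a ℓ|
  have hTVμ : μ.TV = ∑ ℓ, ‖a ℓ‖ := by
    unfold CMeasure.TV
    rw [hμpos]
    simp only [Measure.coe_finset_sum, Finset.sum_apply, Measure.smul_apply,
      Measure.dirac_apply_of_mem (Set.mem_univ _), smul_eq_mul, mul_one]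
    rw [ENNReal.toReal_sum (fun ℓ _ => ENNReal.ofReal_ne_top)]
    exact Finset.sum_congr rfl fun ℓ _ => ENNReal.toReal_ofReal (norm_nonneg _)
  by_cases hg : Integrable (fun x => (starRingEnd ℂ) (φ x) * ν.density x) ν.pos
  · -- integrable case: equality in the duality bound forces |φ| = 1 a.e.
    set f : ℝ → ℝ := fun x => ((starRingEnd ℂ) (φ x) * ν.density x).re with hf
    have hfint : Integrable f ν.pos := hg.re
    have hif : ∫ x, f x ∂ν.pos = ν.pair φ := by
      have h := integral_re hg
      simp only [RCLike.re_to_complex] at h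
      exact h
    have hbound : ∀ᵐ x ∂ν.pos, f x ≤ ‖φ x‖ := by
      filter_upwards [ν.unimodular] with x hx
      calc f x ≤ ‖(starRingEnd ℂ) (φ x) * ν.density x‖ := Complex.re_le_norm _
        _ = ‖φ x‖ * ‖ν.density x‖ := by rw [norm_mul, RingHomIsometric.norm_map]
        _ = ‖φ x‖ := by rw [hx, mul_one]
    have htot : ∫ x, f x ∂ν.pos = (ν.pos Set.univ).toReal := by
      rw [hif, hpair, hμpair, ← hTVμ, ← hmin]; rfl
    have hnonneg : ∀ᵐ x ∂ν.pos, 0 ≤ 1 - f x := by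
      filter_upwards [hbound] with x hx
      have := hφ1 x
      linarith
    have hzero : ∫ x, (1 - f x) ∂ν.pos = 0 := by
      rw [integral_sub (integrable_const 1) hfint, htot]
      simp [Measure.real]
    have heq : (fun x => 1 - f x) =ᵐ[ν.pos] 0 :=
      (integral_eq_zero_iff_of_nonneg_ae hnonneg ((integrable_const 1).sub hfint)).mp hzero
    have hae : ∀ᵐ x ∂ν.pos, ¬ (x ∈ Set.univ \ Set.range t) := by
      filter_upwards [heq, hbound] with x h1x h2x hmem
      have h3 := hφstrict x hmem.2
      simp only [Pi.zero_apply] at h1x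
      linarith
    have h0 := ae_iff.mp hae
    exact measure_mono_null (fun x hx => not_not_intro hx) h0
  · -- non-integrable case: pairing is 0, so ν = 0
    have hp0 : ν.pair φ = 0 := by
      unfold CMeasure.pair
      rw [integral_undef hg]
      simp
    have hTV0 : ν.TV = 0 := by
      rw [hmin, hTVμ, ← hμpair, ← hpair, hp0]
    have huniv : ν.pos Set.univ = 0 := by
      have hne : ν.pos Set.univ ≠ ⊤ := measure_ne_top _ _
      unfold CMeasure.TV at hTV0
      exact (ENNReal.toReal_eq_zero_iff _).mp hTV0 |>.resolve_right hne
    exact measure_mono_null (Set.subset_univ _) huniv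
end

section
/- Consequence: if the predual problem has a solution c₀ with A_g* c₀ extending to an entire function whose modulus is not identically 1 on ℝ, then every TV-minimizing measure solving the constrained problem is a discrete measure (a countable sum of weighted Dirac measures with summable weights). -/
open scoped Classical
open MeasureTheory Complex Filter
open scoped Topology

/-- A TV-minimizing measure concentrated (by the dual certificate) on the set
`{t : |(A_g*c₀)(t)| = 1}`, where `A_g*c₀` extends to an entire function whose modulus is
not identically 1 on ℝ, is a discrete measure: a countable sum of weighted Dirac measures
with summable weights. The measure `ν₀` is given in polar form `dν₀ = u·d|ν₀|`. -/
theorem minimizer_is_discrete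
    (Φ : ℂ → ℂ) (hΦ : Differentiable ℂ Φ)
    (φ : ℝ → ℂ) (hφ : ∀ t : ℝ, φ t = Φ (t : ℂ))
    (hne : ∃ t : ℝ, ‖φ t‖ ≠ 1)
    (ρ : Measure ℝ) [IsFiniteMeasure ρ] (u : ℝ → ℂ)
    (hu : ∀ᵐ x ∂ρ, ‖u x‖ = 1)
    (huint : Integrable u ρ)
    (hsupp : ρ {t : ℝ | ‖φ t‖ ≠ 1} = 0) :
    ∃ (s : ℕ → ℝ) (b : ℕ → ℂ), Summable (fun ℓ => ‖b ℓ‖) ∧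
      ∀ B : Set ℝ, MeasurableSet B →
        (∫ x in B, u x ∂ρ) = ∑' ℓ : ℕ, if s ℓ ∈ B then b ℓ else 0 := by
  classical
  set Z : Set ℝ := {t : ℝ | ‖φ t‖ = 1} with hZdef
  -- the auxiliary real-analytic function
  set f : ℝ → ℂ := fun t => Φ (t : ℂ) * (starRingEnd ℂ) (Φ (t : ℂ)) - 1 with hfdef
  have hΦA : ∀ t : ℝ, AnalyticAt ℝ (fun t : ℝ => Φ (t : ℂ)) t := by
    intro t
    exact ((hΦ.analyticAt ((t : ℝ) : ℂ)).restrictScalars).comp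
      (Complex.ofRealCLM.analyticAt t)
  have hfA : AnalyticOnNhd ℝ f Set.univ := by
    intro t _
    have h1 := hΦA t
    have h2 : AnalyticAt ℝ (fun t : ℝ => (starRingEnd ℂ) (Φ (t : ℂ))) t :=
      (Complex.conjCLE.toContinuousLinearMap.analyticAt _).comp h1
    exact (h1.mul h2).sub analyticAt_const
  have hfval : ∀ t : ℝ, f t = (Complex.normSq (φ t) : ℂ) - 1 := by
    intro t
    simp [hfdef, hφ t, Complex.mul_conj]
  have hfzero : ∀ t ∈ Z, f t = 0 := by
    intro t ht
    have : Complex.normSq (φ t) = 1 := by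
      have := ht
      simp only [hZdef, Set.mem_setOf_eq] at this
      rw [Complex.normSq_eq_norm_sq, this]; norm_num
    rw [hfval t, this]; simp
  obtain ⟨t₀, ht₀⟩ := hne
  have hf₀ : f t₀ ≠ 0 := by
    rw [hfval t₀]
    intro h
    apply ht₀
    have : (Complex.normSq (φ t₀) : ℂ) = 1 := by linear_combination h
    have h2 : Complex.normSq (φ t₀) = 1 := by exact_mod_cast this
    have := Complex.sq_norm (φ t₀)
    nlinarith [norm_nonneg (φ t₀)]
  -- countability of Z via isolated zeros
  have hZc : Z.Countable := by
    have hdisc : DiscreteTopology Z := by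
      rw [discreteTopology_subtype_iff]
      intro t ht
      have hA : AnalyticAt ℝ f t := hfA t (Set.mem_univ t)
      rcases hA.eventually_eq_zero_or_eventually_ne_zero with h | h
      · exfalso
        apply hf₀
        exact hfA.eqOn_zero_of_preconnected_of_eventuallyEq_zero
          isPreconnected_univ (Set.mem_univ t) h (Set.mem_univ t₀)
      · rw [← Filter.empty_mem_iff_bot]
        have : ∀ᶠ x in 𝓝[≠] t, x ∉ Z := by
          filter_upwards [h] with x hx hxZ
          exact hx (hfzero x hxZ)
        rcases this.exists_mem with ⟨V, hV, hVZ⟩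
        refine Filter.mem_inf_of_inter hV (Filter.mem_principal_self Z) ?_
        rintro x ⟨hxV, hxZ⟩
        exact absurd hxZ (hVZ x hxV)
    have : Countable Z := TopologicalSpace.separableSpace_iff_countable.mp inferInstance
    exact Set.countable_coe_iff.mp this
  -- enumeration
  obtain ⟨s, hs⟩ := (hZc.insert 0).exists_eq_range (Set.insert_nonempty _ _)
  have hZr : Z ⊆ Set.range s := by rw [← hs]; exact Set.subset_insert _ _
  have hρZ : ρ (Set.range s)ᶜ = 0 := by
    refine measure_mono_null ?_ hsupp
    intro x hx
    simp only [Set.mem_compl_iff] at hx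
    simp only [Set.mem_setOf_eq]
    intro hab
    exact hx (hZr hab)
  -- disjointify
  set F : ℕ → Prop := fun ℓ => ∀ k < ℓ, s k ≠ s ℓ with hFdef
  set D : ℕ → Set ℝ := fun ℓ => if F ℓ then {s ℓ} else ∅ with hDdef
  have hDsub : ∀ ℓ, D ℓ ⊆ {s ℓ} := by
    intro ℓ
    by_cases h : F ℓ
    · rw [hDdef]; simp only [if_pos h]; exact fun x hx => hx
    · rw [hDdef]; simp only [if_neg h]; exact Set.empty_subset _
  have hDm : ∀ ℓ, MeasurableSet (D ℓ) := fun ℓ =>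
    ((Set.countable_singleton (s ℓ)).mono (hDsub ℓ)).measurableSet
  have hDd : Pairwise (Function.onFun Disjoint D) := by
    intro i j hij
    by_cases hi : F i
    · by_cases hj : F j
      · have hsij : s i ≠ s j := by
          rcases lt_or_gt_of_ne hij with h | h
          · exact hj i h
          · exact fun hh => hi j h hh.symm
        refine Set.disjoint_left.mpr ?_
        intro x hx hx'
        have h1 := hDsub i hx
        have h2 := hDsub j hx'
        simp only [Set.mem_singleton_iff] at h1 h2
        exact hsij (h1 ▸ h2 ▸ rfl)
      · simp [Function.onFun, hDdef, hj]
    · simp [Function.onFun, hDdef, hi]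
  have hDU : (⋃ ℓ, D ℓ) = Set.range s := by
    ext x
    simp only [Set.mem_iUnion, Set.mem_range]
    constructor
    · rintro ⟨ℓ, hℓ⟩
      exact ⟨ℓ, (hDsub ℓ hℓ).symm⟩
    · rintro ⟨m, rfl⟩
      have hex : ∃ k, s k = s m := ⟨m, rfl⟩
      let ℓ := Nat.find hex
      have hℓ : s ℓ = s m := Nat.find_spec hex
      have hF : F ℓ := by
        intro k hk hks
        exact absurd (hks.trans hℓ) (Nat.find_min hex hk)
      refine ⟨ℓ, ?_⟩
      rw [hDdef]
      simp only [if_pos hF, Set.mem_singleton_iff]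
      exact hℓ.symm
  set b : ℕ → ℂ := fun ℓ => ∫ x in D ℓ, u x ∂ρ with hbdef
  refine ⟨s, b, ?_, ?_⟩
  · -- summability
    have hnorm : HasSum (fun ℓ => ∫ x in D ℓ, ‖u x‖ ∂ρ) (∫ x in ⋃ ℓ, D ℓ, ‖u x‖ ∂ρ) :=
      hasSum_integral_iUnion hDm hDd (huint.norm.integrableOn)
    refine Summable.of_nonneg_of_le (fun ℓ => norm_nonneg _) (fun ℓ => ?_) hnorm.summable
    exact norm_integral_le_integral_norm _
  · intro B hB
    -- replace B by B ∩ ⋃ D up to null set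
    have hae : B =ᵐ[ρ] (B ∩ ⋃ ℓ, D ℓ : Set ℝ) := by
      rw [Filter.eventuallyEq_set]
      have hmem : ∀ᵐ x ∂ρ, x ∈ Set.range s := by
        rw [MeasureTheory.ae_iff]
        convert hρZ using 2
        rfl
      filter_upwards [hmem] with x hx
      constructor
      · intro hxB
        refine ⟨hxB, ?_⟩
        rw [hDU]
        exact hx
      · exact fun h => h.1
    have h1 : (∫ x in B, u x ∂ρ) = ∫ x in (B ∩ ⋃ ℓ, D ℓ : Set ℝ), u x ∂ρ :=
      MeasureTheory.setIntegral_congr_set hae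
    have h2 : (B ∩ ⋃ ℓ, D ℓ : Set ℝ) = ⋃ ℓ, B ∩ D ℓ := by
      rw [Set.inter_iUnion]
    have h3 : (∫ x in (⋃ ℓ, B ∩ D ℓ), u x ∂ρ) = ∑' ℓ, ∫ x in (B ∩ D ℓ), u x ∂ρ :=
      MeasureTheory.integral_iUnion (fun ℓ => hB.inter (hDm ℓ))
        (hDd.mono fun i j h => h.mono Set.inter_subset_right Set.inter_subset_right)
        (huint.integrableOn)
    rw [h1, h2, h3]
    congr 1
    funext ℓ
    by_cases hF : F ℓ
    · by_cases hsB : s ℓ ∈ B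
      · have : B ∩ D ℓ = D ℓ := by
          apply Set.inter_eq_self_of_subset_right
          intro x hx
          have := hDsub ℓ hx
          simp only [Set.mem_singleton_iff] at this
          exact this ▸ hsB
        rw [this, if_pos hsB]
      · have : B ∩ D ℓ = ∅ := by
          apply Set.eq_empty_of_forall_notMem
          rintro x ⟨hxB, hxD⟩
          have := hDsub ℓ hxD
          simp only [Set.mem_singleton_iff] at this
          exact hsB (this ▸ hxB)
        rw [this, if_neg hsB]
        simp
    · have hDe : D ℓ = ∅ := by simp [hDdef, hF]
      have hbe : b ℓ = 0 := by simp [hbdef, hDe]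
      rw [hDe]
      simp [hbe]
end
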